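/- Let K be an algebraically closed field, Q a finite connected acyclic quiver with n vertices, A = KQ its path algebra, and B = K·1_A + rad A the primary arrow subalgebra. Then there is an isomorphism of A-B-bimodules A ⊗_B A ≅ A ⊕ ⨁_{i=1}^{n} (n-1)·(_i K_ε), where _i K_ε denotes the one-dimensional A-B-bimodule K on which A acts via the augmentation ρ_i (projection onto the coefficient of the stationary path ε_i modulo rad A) and B acts via the augmentation ε : B → B/rad B ≅ K. In particular, as B-B-bimodules A ⊗_B A ≅ A ⊕ n(n-1)·(_ε K_ε). -/

import Mathlib

/-! # Depth of subring extensions (Kadison–Young)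
For a unital subring `B ⊆ A`, `CC B n` realizes the `n`-fold relative tensor power
`C_n(A,B) = A ⊗_B ⋯ ⊗_B A` (with `C_0(A,B) = B`) as a quotient of the iterated
tensor power over `ℤ` by the middle `B`-balancing relations, together with its
natural left/right `A`- and `B`-actions.  Bimodule maps, the divisibility relation
`M ∣ q ⬝ N`, H-equivalence, the depth conditions and the minimum depth `d(B,A) ∈ ℕ∞`
are then defined exactly as in the paper. -/

open TensorProduct

universe u

variable (A : Type u) [Ring A]

/-- `Tpow A n` is the `(n+1)`-fold tensor power `A ⊗ℤ ⋯ ⊗ℤ A`. -/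
noncomputable def Tpow : ℕ → ModuleCat.{u} ℤ
  | 0 => ModuleCat.of ℤ A
  | n + 1 => ModuleCat.of ℤ (A ⊗[ℤ] (Tpow n : Type u))

/-- Multiplication by `a : A` on the leftmost tensor factor. -/
noncomputable def lmulT (a : A) : ∀ n, (Tpow A n : Type u) →ₗ[ℤ] (Tpow A n : Type u)
  | 0 => (LinearMap.mulLeft ℤ a : A →ₗ[ℤ] A)
  | n + 1 => LinearMap.rTensor (Tpow A n : Type u) (LinearMap.mulLeft ℤ a)

/-- Multiplication by `a : A` on the rightmost tensor factor. -/
noncomputable def rmulT (a : A) : ∀ n, (Tpow A n : Type u) →ₗ[ℤ] (Tpow A n : Type u)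
  | 0 => (LinearMap.mulRight ℤ a : A →ₗ[ℤ] A)
  | n + 1 => LinearMap.lTensor A (rmulT a n)

private theorem lmulT_succ_apply (a : A) (n : ℕ) (x : A ⊗[ℤ] (Tpow A n : Type u)) :
    lmulT A a (n+1) x = LinearMap.rTensor (Tpow A n : Type u) (LinearMap.mulLeft ℤ a) x := rfl

private theorem rmulT_succ_apply (a : A) (n : ℕ) (x : A ⊗[ℤ] (Tpow A n : Type u)) :
    rmulT A a (n+1) x = LinearMap.lTensor A (rmulT A a n) x := rfl

private theorem auxcomm (M : Type u) [AddCommGroup M] [Module ℤ M] (a : A) (g : M →ₗ[ℤ] M)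
    (x : A ⊗[ℤ] M) :
    (LinearMap.rTensor M (LinearMap.mulLeft ℤ a)) ((LinearMap.lTensor A g) x) =
    (LinearMap.lTensor A g) ((LinearMap.rTensor M (LinearMap.mulLeft ℤ a)) x) := by
  induction x using TensorProduct.induction_on with
  | zero => simp
  | tmul c t => simp
  | add y z hy hz => simp only [map_add, hy, hz]

theorem lmulT_rmulT_comm (a b : A) : ∀ (n : ℕ) (x : (Tpow A n : Type u)),
    lmulT A a n (rmulT A b n x) = rmulT A b n (lmulT A a n x)
  | 0, x => (mul_assoc a x b).symm
  | n + 1, x => by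
    show (lmulT A a (n+1)) ((rmulT A b (n+1)) x) = (rmulT A b (n+1)) ((lmulT A a (n+1)) x)
    rw [lmulT, rmulT]
    exact auxcomm A (Tpow A n : Type u) a (rmulT A b n) x

private theorem aux1 (M : Type u) [AddCommGroup M] [Module ℤ M] (a c d : A) (t s : M) :
    LinearMap.rTensor M (LinearMap.mulLeft ℤ a) (c ⊗ₜ[ℤ] t - d ⊗ₜ[ℤ] s) =
      (a * c) ⊗ₜ[ℤ] t - (a * d) ⊗ₜ[ℤ] s := by simp

private theorem aux2 (M : Type u) [AddCommGroup M] [Module ℤ M] (g : M →ₗ[ℤ] M) (c d : A)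
    (t s : M) :
    LinearMap.lTensor A g (c ⊗ₜ[ℤ] t - d ⊗ₜ[ℤ] s) = c ⊗ₜ[ℤ] (g t) - d ⊗ₜ[ℤ] (g s) := by simp

private theorem aux3 (M : Type u) [AddCommGroup M] [Module ℤ M] (a c : A) (t : M) :
    LinearMap.rTensor M (LinearMap.mulLeft ℤ a) (c ⊗ₜ[ℤ] t) = (a * c) ⊗ₜ[ℤ] t := by simp

private theorem aux4 (M : Type u) [AddCommGroup M] [Module ℤ M] (g : M →ₗ[ℤ] M) (c : A) (t : M) :
    LinearMap.lTensor A g (c ⊗ₜ[ℤ] t) = c ⊗ₜ[ℤ] (g t) := by simp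


variable {A}

/-- The `B`-balancing relations inside `Tpow A n`. -/
noncomputable def rel (B : Subring A) : ∀ n, Submodule ℤ (Tpow A n : Type u)
  | 0 => ⊥
  | n + 1 =>
      Submodule.span ℤ
        {x : (Tpow A (n+1) : Type u) |
          (∃ (a : A) (b : B) (t : (Tpow A n : Type u)),
            x = ((a * (b : A)) ⊗ₜ[ℤ] t : A ⊗[ℤ] (Tpow A n : Type u)) -
                 a ⊗ₜ[ℤ] (lmulT A (b : A) n t)) ∨
          (∃ (a : A) (r : (Tpow A n : Type u)), r ∈ rel B n ∧
            x = (a ⊗ₜ[ℤ] r : A ⊗[ℤ] (Tpow A n : Type u)))}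

theorem rel_succ (B : Subring A) (n : ℕ) :
    rel B (n+1) =
      Submodule.span ℤ
        {x : (Tpow A (n+1) : Type u) |
          (∃ (a : A) (b : B) (t : (Tpow A n : Type u)),
            x = ((a * (b : A)) ⊗ₜ[ℤ] t : A ⊗[ℤ] (Tpow A n : Type u)) -
                 a ⊗ₜ[ℤ] (lmulT A (b : A) n t)) ∨
          (∃ (a : A) (r : (Tpow A n : Type u)), r ∈ rel B n ∧
            x = (a ⊗ₜ[ℤ] r : A ⊗[ℤ] (Tpow A n : Type u)))} := rfl

theorem rel_le_comap_lmulT (B : Subring A) (a : A) :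
    ∀ n, rel B n ≤ (rel B n).comap (lmulT A a n)
  | 0 => bot_le
  | n + 1 => by
    rw [rel_succ, Submodule.span_le]
    intro x hx
    change lmulT A a (n+1) x ∈ Submodule.span ℤ _
    rcases hx with (⟨a', b, t, rfl⟩ | ⟨a', r, hr, rfl⟩) <;> rw [lmulT_succ_apply]
    · rw [map_sub, LinearMap.rTensor_tmul, LinearMap.rTensor_tmul, LinearMap.mulLeft_apply,
        LinearMap.mulLeft_apply]
      refine Submodule.subset_span (Or.inl ⟨a * a', b, t, ?_⟩)
      rw [mul_assoc]
    · rw [LinearMap.rTensor_tmul, LinearMap.mulLeft_apply]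
      exact Submodule.subset_span (Or.inr ⟨a * a', r, hr, rfl⟩)

theorem rel_le_comap_rmulT (B : Subring A) (a : A) :
    ∀ n, rel B n ≤ (rel B n).comap (rmulT A a n)
  | 0 => bot_le
  | n + 1 => by
    rw [rel_succ, Submodule.span_le]
    intro x hx
    change rmulT A a (n+1) x ∈ Submodule.span ℤ _
    rcases hx with (⟨a', b, t, rfl⟩ | ⟨a', r, hr, rfl⟩) <;> rw [rmulT_succ_apply]
    · rw [map_sub, LinearMap.lTensor_tmul, LinearMap.lTensor_tmul, ← lmulT_rmulT_comm]
      exact Submodule.subset_span (Or.inl ⟨a', b, rmulT A a n t, rfl⟩)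
    · rw [LinearMap.lTensor_tmul]
      exact Submodule.subset_span
        (Or.inr ⟨a', rmulT A a n r, rel_le_comap_rmulT B a n hr, rfl⟩)

/-- `CC B n` is `C_n(A,B) = A ⊗_B ⋯ ⊗_B A` (`n` factors of `A`), with `CC B 0 = B`. -/
noncomputable def CC (B : Subring A) : ℕ → ModuleCat.{u} ℤ
  | 0 => ModuleCat.of ℤ B
  | n + 1 => ModuleCat.of ℤ ((Tpow A n : Type u) ⧸ rel B n)

/-- The left `A`-action on `C_{n+1}(A,B)`. -/
noncomputable def lA (B : Subring A) (a : A) (n : ℕ) :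
    (CC B (n+1) : Type u) →ₗ[ℤ] (CC B (n+1) : Type u) :=
  (Submodule.mapQ _ _ (lmulT A a n) (rel_le_comap_lmulT B a n) :
    ((Tpow A n : Type u) ⧸ rel B n) →ₗ[ℤ] ((Tpow A n : Type u) ⧸ rel B n))

/-- The right `A`-action on `C_{n+1}(A,B)`. -/
noncomputable def rA (B : Subring A) (a : A) (n : ℕ) :
    (CC B (n+1) : Type u) →ₗ[ℤ] (CC B (n+1) : Type u) :=
  (Submodule.mapQ _ _ (rmulT A a n) (rel_le_comap_rmulT B a n) :
    ((Tpow A n : Type u) ⧸ rel B n) →ₗ[ℤ] ((Tpow A n : Type u) ⧸ rel B n))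

/-- The left `B`-action on `C_n(A,B)`. -/
noncomputable def lB (B : Subring A) (b : B) : ∀ n, (CC B n : Type u) →ₗ[ℤ] (CC B n : Type u)
  | 0 => (LinearMap.mulLeft ℤ b : B →ₗ[ℤ] B)
  | n + 1 => lA B (b : A) n

/-- The right `B`-action on `C_n(A,B)`. -/
noncomputable def rB (B : Subring A) (b : B) : ∀ n, (CC B n : Type u) →ₗ[ℤ] (CC B n : Type u)
  | 0 => (LinearMap.mulRight ℤ b : B →ₗ[ℤ] B)
  | n + 1 => rA B (b : A) n

/-- `f` is a morphism of `B`-`B`-bimodules `C_m(A,B) → C_n(A,B)`. -/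
def IsBBHom (B : Subring A) {m n : ℕ} (f : (CC B m : Type u) →ₗ[ℤ] (CC B n : Type u)) : Prop :=
  ∀ b : B, (∀ x, f (lB B b m x) = lB B b n (f x)) ∧ (∀ x, f (rB B b m x) = rB B b n (f x))

/-- `f` is a morphism of `A`-`B`-bimodules `C_{m+1}(A,B) → C_{n+1}(A,B)`. -/
def IsABHom (B : Subring A) {m n : ℕ}
    (f : (CC B (m+1) : Type u) →ₗ[ℤ] (CC B (n+1) : Type u)) : Prop :=
  (∀ (a : A) x, f (lA B a m x) = lA B a n (f x)) ∧
  (∀ (b : B) x, f (rB B b (m+1) x) = rB B b (n+1) (f x))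

/-- `f` is a morphism of `B`-`A`-bimodules `C_{m+1}(A,B) → C_{n+1}(A,B)`. -/
def IsBAHom (B : Subring A) {m n : ℕ}
    (f : (CC B (m+1) : Type u) →ₗ[ℤ] (CC B (n+1) : Type u)) : Prop :=
  (∀ (b : B) x, f (lB B b (m+1) x) = lB B b (n+1) (f x)) ∧
  (∀ (a : A) x, f (rA B a m x) = rA B a n (f x))

/-- `C_m(A,B)` divides a multiple of `C_n(A,B)` as `B`-`B`-bimodules. -/
def DividesBB (B : Subring A) (m n : ℕ) : Prop :=
  ∃ (r : ℕ) (f : Fin r → ((CC B m : Type u) →ₗ[ℤ] (CC B n : Type u)))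
    (g : Fin r → ((CC B n : Type u) →ₗ[ℤ] (CC B m : Type u))),
    (∀ i, IsBBHom B (f i)) ∧ (∀ i, IsBBHom B (g i)) ∧
      ∑ i, (g i).comp (f i) = LinearMap.id

/-- `C_{m+1}(A,B)` divides a multiple of `C_{n+1}(A,B)` as `A`-`B`-bimodules. -/
def DividesAB (B : Subring A) (m n : ℕ) : Prop :=
  ∃ (r : ℕ) (f : Fin r → ((CC B (m+1) : Type u) →ₗ[ℤ] (CC B (n+1) : Type u)))
    (g : Fin r → ((CC B (n+1) : Type u) →ₗ[ℤ] (CC B (m+1) : Type u))),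
    (∀ i, IsABHom B (f i)) ∧ (∀ i, IsABHom B (g i)) ∧
      ∑ i, (g i).comp (f i) = LinearMap.id

/-- `C_{m+1}(A,B)` divides a multiple of `C_{n+1}(A,B)` as `B`-`A`-bimodules. -/
def DividesBA (B : Subring A) (m n : ℕ) : Prop :=
  ∃ (r : ℕ) (f : Fin r → ((CC B (m+1) : Type u) →ₗ[ℤ] (CC B (n+1) : Type u)))
    (g : Fin r → ((CC B (n+1) : Type u) →ₗ[ℤ] (CC B (m+1) : Type u))),
    (∀ i, IsBAHom B (f i)) ∧ (∀ i, IsBAHom B (g i)) ∧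
      ∑ i, (g i).comp (f i) = LinearMap.id

/-- H-equivalence of `C_m` and `C_n` as `B`-`B`-bimodules. -/
def HequivBB (B : Subring A) (m n : ℕ) : Prop := DividesBB B m n ∧ DividesBB B n m

/-- H-equivalence of `C_{m+1}` and `C_{n+1}` as `A`-`B`-bimodules. -/
def HequivAB (B : Subring A) (m n : ℕ) : Prop := DividesAB B m n ∧ DividesAB B n m

/-- H-equivalence of `C_{m+1}` and `C_{n+1}` as `B`-`A`-bimodules. -/
def HequivBA (B : Subring A) (m n : ℕ) : Prop := DividesBA B m n ∧ DividesBA B n m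

/-- The extension `B ⊆ A` has depth `d`: depth `2n+1` (`n ≥ 0`) means
`C_{n+1} ∼ C_n` as `B`-`B`-bimodules, and right (resp. left) depth `2n` (`n ≥ 1`)
means `C_{n+1} ∼ C_n` as `A`-`B`- (resp. `B`-`A`-) bimodules. -/
def HasDepth (B : Subring A) (d : ℕ) : Prop :=
  (∃ n : ℕ, d = 2 * n + 1 ∧ HequivBB B (n+1) n) ∨
  (∃ n : ℕ, d = 2 * (n+1) ∧ (HequivAB B (n+1) n ∨ HequivBA B (n+1) n))

/-- The minimum depth `d(B,A) ∈ ℕ∞` of the subring extension `B ⊆ A`. -/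
noncomputable def depth (B : Subring A) : ℕ∞ :=
  sInf {d : ℕ∞ | ∃ m : ℕ, HasDepth B m ∧ d = (m : ℕ∞)}

/-- The augmentation `ρ_i : A → K` of the path algebra, reading off the coefficient
of the stationary path `ε_i`. -/
noncomputable def rhoAug {K : Type u} [Field K] {V : Type u} [Quiver.{u+1} V]
    {A : Type u} [Ring A] [Algebra K A]
    (bas : Module.Basis (Σ (a : V) (b : V), Quiver.Path a b) K A) (i : V) (a : A) : K :=
  bas.repr a ⟨i, i, Quiver.Path.nil⟩


/-! Put `π x = ∑ ρᵢ(x) εᵢ` (`vertexPart`). Since `x - π x` lies in the ideal `rad A ⊆ B`,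
balancing over `B` gives `x ⊗ y = (xy - π x π y) ⊗ 1 + π x ⊗ π y`, and
`π x ⊗ π y - (π x π y) ⊗ 1` is a combination of the `εᵢ ⊗ εⱼ` with `i ≠ j`. Hence
`x ⊗ y ↦ (xy, (ρᵢ(x) ρⱼ(y))_{i ≠ j})` is an isomorphism onto `A × K^{n(n-1)}`, with inverse
`(a, c) ↦ a ⊗ 1 + ∑_{i ≠ j} (c_{ij} - ρᵢ(a)) εᵢ ⊗ εⱼ`; it intertwines the actions because each
`ρᵢ` is an algebra map and all `ρᵢ` agree on `B`. -/

theorem Module.Basis.map_mem_of_forall {ι R M N : Type*} [Semiring R] [AddCommMonoid M]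
    [Module R M] [AddCommMonoid N] [Module R N] (b : Module.Basis ι R M) (f : M →ₗ[R] N)
    {p : Submodule R N} (h : ∀ i, f (b i) ∈ p) (x : M) : f x ∈ p := by
  have hle : Submodule.span R (Set.range b) ≤ p.comap f :=
    Submodule.span_le.2 (Set.range_subset_iff.2 h)
  exact hle (b.span_eq ▸ Submodule.mem_top)

theorem Quiver.sigmaPath_eq_nil_or_length_ne_zero {V : Type*} [Quiver V]
    (t : Σ (a : V) (b : V), Quiver.Path a b) : (∃ i, t = ⟨i, i, .nil⟩) ∨ t.2.2.length ≠ 0 := by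
  obtain ⟨a, b, p⟩ := t
  cases p with
  | nil => exact Or.inl ⟨a, rfl⟩
  | cons p e => exact Or.inr (by simp)

abbrev OffDiag (V : Type*) := {p : V × V // p.1 ≠ p.2}

theorem Fintype.sum_offDiag {V M : Type*} [Fintype V] [DecidableEq V] [AddCommMonoid M]
    (f : V → V → M) (hf : ∀ i, f i i = 0) :
    ∑ p : OffDiag V, f p.1.1 p.1.2 = ∑ i, ∑ j, f i j := by
  rw [← Fintype.sum_prod_type', ← Finset.sum_subtype {p : V × V | p.1 ≠ p.2} (by simp)
    (fun p => f p.1 p.2), Finset.sum_filter_of_ne]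
  rintro ⟨i, j⟩ - hij (rfl : i = j)
  exact hij (hf i)

noncomputable def offDiagEquiv (V : Type*) [Fintype V] [DecidableEq V] :
    V × Fin (Fintype.card V - 1) ≃ OffDiag V :=
  (Equiv.sigmaEquivProd V _).symm.trans <|
    (Equiv.sigmaCongrRight fun i =>
      (Fintype.equivFinOfCardEq (by simp [Fintype.card_subtype_compl])).symm).trans
      (Equiv.subtypeProdEquivSigmaSubtype fun i j : V => i ≠ j).symm

theorem offDiagEquiv_fst {V : Type*} [Fintype V] [DecidableEq V]
    (q : V × Fin (Fintype.card V - 1)) : (offDiagEquiv V q).1.1 = q.1 := rfl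

namespace CC

variable (B : Subring A)

noncomputable def mkTwo : A ⊗[ℤ] A →ₗ[ℤ] (CC B 2 : Type u) := (rel B 1).mkQ

theorem mkTwo_mul_tmul {b : A} (hb : b ∈ B) (a t : A) :
    mkTwo B ((a * b) ⊗ₜ t) = mkTwo B (a ⊗ₜ (b * t)) := by
  refine (Submodule.Quotient.eq _).2 ?_
  rw [rel_succ]
  exact Submodule.subset_span (Or.inl ⟨a, ⟨b, hb⟩, t, rfl⟩)

theorem mkTwo_tmul_of_mem {b : A} (hb : b ∈ B) (a : A) :
    mkTwo B (a ⊗ₜ b) = mkTwo B ((a * b) ⊗ₜ 1) := by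
  rw [mkTwo_mul_tmul B hb, mul_one]

theorem mkTwo_of_mem_tmul {b : A} (hb : b ∈ B) (t : A) :
    mkTwo B (b ⊗ₜ t) = mkTwo B (1 ⊗ₜ (b * t)) := by
  rw [← mkTwo_mul_tmul B hb, one_mul]

theorem mkTwo_smul_tmul {K : Type*} [CommRing K] [Algebra K A]
    (hK : ∀ c : K, algebraMap K A c ∈ B) (c : K) (x y : A) :
    mkTwo B ((c • x) ⊗ₜ y) = mkTwo B (x ⊗ₜ (c • y)) := by
  rw [Algebra.smul_def c y, ← mkTwo_mul_tmul B (hK c), Algebra.smul_def, Algebra.commutes]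

theorem lA_mkTwo (a x y : A) : lA B a 1 (mkTwo B (x ⊗ₜ y)) = mkTwo B ((a * x) ⊗ₜ y) := rfl

theorem rB_mkTwo (b : B) (x y : A) : rB B b 2 (mkTwo B (x ⊗ₜ y)) = mkTwo B (x ⊗ₜ (y * b)) :=
  rfl

theorem induction_two {P : (CC B 2 : Type u) → Prop} (tmul : ∀ x y, P (mkTwo B (x ⊗ₜ y)))
    (add : ∀ x y, P x → P y → P (x + y)) (x : (CC B 2 : Type u)) : P x := by
  obtain ⟨t, rfl⟩ : ∃ t : A ⊗[ℤ] A, mkTwo B t = x := (rel B 1).mkQ_surjective x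
  induction t using TensorProduct.induction_on with
  | zero => simpa using tmul 0 0
  | tmul x y => exact tmul x y
  | add t t' ht ht' => rw [map_add]; exact add _ _ ht ht'

end CC

section Splitting

variable {K : Type*} [CommRing K] [Algebra K A] {V : Type*}

noncomputable def splitTmul (ρ : V → A →ₐ[K] K) : A ⊗[ℤ] A →ₗ[ℤ] A × (OffDiag V → K) :=
  TensorProduct.lift <| LinearMap.mk₂ ℤ (fun x y => (x * y, fun p => ρ p.1.1 x * ρ p.1.2 y))
    (fun _ _ _ => by ext <;> simp [add_mul]) (fun _ _ _ => by ext <;> simp [-zsmul_eq_mul])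
    (fun _ _ _ => by ext <;> simp [mul_add]) (fun _ _ _ => by ext <;> simp [-zsmul_eq_mul])

theorem splitTmul_tmul (ρ : V → A →ₐ[K] K) (x y : A) :
    splitTmul ρ (x ⊗ₜ y) = (x * y, fun p => ρ p.1.1 x * ρ p.1.2 y) := rfl

theorem rel_one_le_ker_splitTmul {B : Subring A} {ρ : V → A →ₐ[K] K}
    (hρ : ∀ b ∈ B, ∀ i j, ρ i b = ρ j b) :
    (rel B 1 : Submodule ℤ (A ⊗[ℤ] A)) ≤ LinearMap.ker (splitTmul ρ) := by
  rw [rel_succ]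
  refine Submodule.span_le.2 ?_
  have hbal : ∀ {b : A}, b ∈ B → ∀ a t : A, splitTmul ρ ((a * b) ⊗ₜ t - a ⊗ₜ (b * t)) = 0 :=
    fun hb a t => Prod.ext (by simp [splitTmul_tmul, mul_assoc])
      (funext fun p => by simp [splitTmul_tmul, mul_assoc, hρ _ hb p.1.1 p.1.2])
  rintro _ (⟨a, ⟨b, hb⟩, t, rfl⟩ | ⟨a, r, hr, rfl⟩)
  · exact hbal hb a t
  · obtain rfl : r = 0 := hr
    simp only [tmul_zero]
    exact zero_mem _

noncomputable def splitTensorSquare {B : Subring A} {ρ : V → A →ₐ[K] K}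
    (hρ : ∀ b ∈ B, ∀ i j, ρ i b = ρ j b) : (CC B 2 : Type u) →ₗ[ℤ] A × (OffDiag V → K) :=
  (rel B 1).liftQ (splitTmul ρ) (rel_one_le_ker_splitTmul hρ)

theorem splitTensorSquare_mkTwo {B : Subring A} {ρ : V → A →ₐ[K] K}
    (hρ : ∀ b ∈ B, ∀ i j, ρ i b = ρ j b) (t : A ⊗[ℤ] A) :
    splitTensorSquare hρ (CC.mkTwo B t) = splitTmul ρ t := rfl

variable [Fintype V] [DecidableEq V]

def vertexPart (ε : V → A) (ρ : V → A →ₐ[K] K) (x : A) : A := ∑ i, ρ i x • ε i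

noncomputable def unsplitTensorSquare (B : Subring A) (ε : V → A) (ρ : V → A →ₐ[K] K) :
    A × (OffDiag V → K) →+ (CC B 2 : Type u) where
  toFun w := CC.mkTwo B (w.1 ⊗ₜ 1) +
    ∑ p : OffDiag V, CC.mkTwo B (((w.2 p - ρ p.1.1 w.1) • ε p.1.1) ⊗ₜ ε p.1.2)
  map_zero' := by simp
  map_add' v w := by
    simp only [Prod.fst_add, Prod.snd_add, Pi.add_apply, map_add, add_sub_add_comm, add_smul,
      add_tmul, Finset.sum_add_distrib]
    abel

theorem unsplitTensorSquare_apply (B : Subring A) (ε : V → A) (ρ : V → A →ₐ[K] K)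
    (a : A) (c : OffDiag V → K) :
    unsplitTensorSquare B ε ρ (a, c) = CC.mkTwo B (a ⊗ₜ 1) +
      ∑ p : OffDiag V, CC.mkTwo B (((c p - ρ p.1.1 a) • ε p.1.1) ⊗ₜ ε p.1.2) := rfl

/-- The situation `B = K·1 + rad A ⊆ A = KQ`: `ε` are the stationary paths, `ρ` the
augmentations, and `x - vertexPart ε ρ x` is the radical part of `x`. -/
structure IsPrimarySplitting (B : Subring A) (ε : V → A) (ρ : V → A →ₐ[K] K) : Prop where
  mul_eq : ∀ i j, ε i * ε j = if i = j then ε i else 0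
  sum_eq_one : ∑ i, ε i = 1
  apply_eq : ∀ i j, ρ i (ε j) = if i = j then 1 else 0
  algebraMap_mem : ∀ c : K, algebraMap K A c ∈ B
  eq_of_mem : ∀ b ∈ B, ∀ i j, ρ i b = ρ j b
  sub_vertexPart_mul_mem : ∀ x y, (x - vertexPart ε ρ x) * y ∈ B

namespace IsPrimarySplitting

variable {B : Subring A} {ε : V → A} {ρ : V → A →ₐ[K] K} (h : IsPrimarySplitting B ε ρ)
include h

theorem vertexPart_mul_vertexPart (x y : A) :
    vertexPart ε ρ x * vertexPart ε ρ y = ∑ i, (ρ i x * ρ i y) • ε i := by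
  simp only [vertexPart, Finset.sum_mul, Finset.mul_sum, smul_mul_smul_comm, h.mul_eq,
    smul_ite, smul_zero, Finset.sum_ite_eq', Finset.mem_univ, if_true]

theorem mkTwo_tmul_eq (x y : A) :
    CC.mkTwo B (x ⊗ₜ y) = CC.mkTwo B ((x * y - vertexPart ε ρ x * vertexPart ε ρ y) ⊗ₜ 1)
      + CC.mkTwo B (vertexPart ε ρ x ⊗ₜ vertexPart ε ρ y) := by
  set x₀ := vertexPart ε ρ x
  set y₀ := vertexPart ε ρ y
  have hx : x - x₀ ∈ B := by simpa using h.sub_vertexPart_mul_mem x 1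
  have hy : y - y₀ ∈ B := by simpa using h.sub_vertexPart_mul_mem y 1
  have hxy : CC.mkTwo B ((x - x₀) ⊗ₜ y₀) = CC.mkTwo B (((x - x₀) * y₀) ⊗ₜ 1) := by
    rw [CC.mkTwo_of_mem_tmul B hx, CC.mkTwo_tmul_of_mem B (h.sub_vertexPart_mul_mem x y₀),
      one_mul]
  have hsplit : x ⊗ₜ[ℤ] y = x ⊗ₜ (y - y₀) + (x - x₀) ⊗ₜ y₀ + x₀ ⊗ₜ y₀ := by
    rw [tmul_sub, sub_tmul]; abel
  rw [hsplit, map_add, map_add, CC.mkTwo_tmul_of_mem B hy, hxy, ← map_add, ← add_tmul]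
  congr 3
  noncomm_ring

theorem mkTwo_vertexPart_tmul (x y : A) :
    CC.mkTwo B (vertexPart ε ρ x ⊗ₜ vertexPart ε ρ y)
      - CC.mkTwo B ((vertexPart ε ρ x * vertexPart ε ρ y) ⊗ₜ 1) =
      ∑ p : OffDiag V,
        CC.mkTwo B (((ρ p.1.1 x * ρ p.1.2 y - ρ p.1.1 (x * y)) • ε p.1.1) ⊗ₜ ε p.1.2) := by
  have hprod : CC.mkTwo B (vertexPart ε ρ x ⊗ₜ vertexPart ε ρ y) =
      ∑ i, ∑ j, CC.mkTwo B (((ρ i x * ρ j y) • ε i) ⊗ₜ ε j) := by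
    rw [vertexPart, sum_tmul, map_sum]
    refine Finset.sum_congr rfl fun i _ => ?_
    rw [vertexPart, tmul_sum, map_sum]
    refine Finset.sum_congr rfl fun j _ => ?_
    rw [← CC.mkTwo_smul_tmul B h.algebraMap_mem, smul_smul, mul_comm]
  have hdiag : CC.mkTwo B ((vertexPart ε ρ x * vertexPart ε ρ y) ⊗ₜ 1) =
      ∑ i, ∑ j, CC.mkTwo B (((ρ i x * ρ i y) • ε i) ⊗ₜ ε j) := by
    rw [h.vertexPart_mul_vertexPart, sum_tmul, map_sum]
    refine Finset.sum_congr rfl fun i _ => ?_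
    rw [← h.sum_eq_one, tmul_sum, map_sum]
  rw [Fintype.sum_offDiag (fun i j => CC.mkTwo B (((ρ i x * ρ j y - ρ i (x * y)) • ε i) ⊗ₜ ε j))
    (fun i => by simp), hprod, hdiag, ← Finset.sum_sub_distrib]
  simp only [map_mul, ← Finset.sum_sub_distrib, ← map_sub, ← sub_tmul, ← sub_smul]

theorem unsplit_splitTmul (t : A ⊗[ℤ] A) :
    unsplitTensorSquare B ε ρ (splitTmul ρ t) = CC.mkTwo B t := by
  induction t using TensorProduct.induction_on with
  | zero => simp
  | tmul x y =>
    rw [splitTmul_tmul, unsplitTensorSquare_apply, ← h.mkTwo_vertexPart_tmul,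
      h.mkTwo_tmul_eq x y, sub_tmul, map_sub]
    abel
  | add t t' ht ht' => rw [map_add, map_add, map_add, ht, ht']

theorem splitTmul_smul_tmul (p : OffDiag V) (d : K) :
    splitTmul ρ ((d • ε p.1.1) ⊗ₜ ε p.1.2) = (0, Pi.single p d) := by
  rw [splitTmul_tmul]
  refine Prod.ext (by simp [h.mul_eq, p.2]) (funext fun q => ?_)
  simp only [map_smul, h.apply_eq, smul_eq_mul, Pi.single_apply, Subtype.ext_iff, Prod.ext_iff]
  split_ifs <;> simp_all

theorem splitTmul_unsplit (w : A × (OffDiag V → K)) :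
    splitTensorSquare h.eq_of_mem (unsplitTensorSquare B ε ρ w) = w := by
  obtain ⟨a, c⟩ := w
  simp only [unsplitTensorSquare_apply, map_add, map_sum, splitTensorSquare_mkTwo,
    splitTmul_tmul, h.splitTmul_smul_tmul]
  refine Prod.ext (by simp [Prod.fst_sum]) ?_
  ext p
  simp [Prod.snd_sum, Finset.univ_sum_single]

theorem unsplit_splitTensorSquare (x : (CC B 2 : Type u)) :
    unsplitTensorSquare B ε ρ (splitTensorSquare h.eq_of_mem x) = x := by
  induction x using CC.induction_two B with
  | tmul x y => exact h.unsplit_splitTmul (x ⊗ₜ y)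
  | add x y hx hy => rw [map_add, map_add, hx, hy]

noncomputable def tensorSquareEquiv : (CC B 2 : Type u) ≃ₗ[ℤ] A × (OffDiag V → K) :=
  { splitTensorSquare h.eq_of_mem with
    invFun := unsplitTensorSquare B ε ρ
    left_inv := h.unsplit_splitTensorSquare
    right_inv := h.splitTmul_unsplit }

theorem tensorSquareEquiv_mkTwo (t : A ⊗[ℤ] A) :
    h.tensorSquareEquiv (CC.mkTwo B t) = splitTmul ρ t := rfl

theorem tensorSquareEquiv_lA (a : A) (x : (CC B 2 : Type u)) :
    h.tensorSquareEquiv (lA B a 1 x) =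
      (a * (h.tensorSquareEquiv x).1, fun p => ρ p.1.1 a * (h.tensorSquareEquiv x).2 p) := by
  induction x using CC.induction_two B with
  | tmul x y =>
    rw [CC.lA_mkTwo, tensorSquareEquiv_mkTwo, tensorSquareEquiv_mkTwo, splitTmul_tmul,
      splitTmul_tmul]
    simp [mul_assoc]
  | add x y hx hy =>
    rw [map_add, map_add, hx, hy, map_add]
    ext <;> simp [mul_add]

theorem tensorSquareEquiv_rB (b : B) (x : (CC B 2 : Type u)) :
    h.tensorSquareEquiv (rB B b 2 x) =
      ((h.tensorSquareEquiv x).1 * b, fun p => (h.tensorSquareEquiv x).2 p * ρ p.1.1 b) := by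
  induction x using CC.induction_two B with
  | tmul x y =>
    rw [CC.rB_mkTwo, tensorSquareEquiv_mkTwo, tensorSquareEquiv_mkTwo, splitTmul_tmul,
      splitTmul_tmul]
    ext p
    · simp [mul_assoc]
    · simp [mul_assoc, h.eq_of_mem b b.2 p.1.2 p.1.1]
  | add x y hx hy =>
    rw [map_add, map_add, hx, hy, map_add]
    ext <;> simp [add_mul]

end IsPrimarySplitting

end Splitting

section PathAlgebra

variable {K V : Type u} [Field K] [Quiver.{u+1} V] [Algebra K A]
  (bas : Module.Basis (Σ (a : V) (b : V), Quiver.Path a b) K A)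

def arrowPaths : Set A :=
  {x | ∃ (i j : V) (p : Quiver.Path i j), p.length ≠ 0 ∧ x = bas ⟨i, j, p⟩}

def arrowIdeal : Submodule K A := Submodule.span K (arrowPaths bas)

def primaryArrowSubalgebra : Subalgebra K A := Algebra.adjoin K (arrowPaths bas)

theorem basis_mem_arrowIdeal {t : Σ (a : V) (b : V), Quiver.Path a b} (ht : t.2.2.length ≠ 0) :
    bas t ∈ arrowIdeal bas :=
  Submodule.subset_span ⟨t.1, t.2.1, t.2.2, ht, rfl⟩

theorem rhoAug_basis_of_ne {i : V} {t : Σ (a : V) (b : V), Quiver.Path a b}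
    (ht : t ≠ ⟨i, i, .nil⟩) : rhoAug bas i (bas t) = 0 := by
  simp [rhoAug, Finsupp.single_eq_of_ne ht.symm]

theorem rhoAug_vertex [DecidableEq V] (i j : V) :
    rhoAug bas i (bas ⟨j, j, .nil⟩) = if i = j then 1 else 0 := by
  split_ifs with hij
  · subst hij
    simp [rhoAug]
  · exact rhoAug_basis_of_ne bas fun h => hij (congrArg Sigma.fst h).symm

theorem rhoAug_basis_of_length_ne_zero {t : Σ (a : V) (b : V), Quiver.Path a b}
    (ht : t.2.2.length ≠ 0) (i : V) : rhoAug bas i (bas t) = 0 :=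
  rhoAug_basis_of_ne bas fun h => ht (by rw [h]; rfl)

theorem rhoAug_eq_zero_of_mem_arrowIdeal {r : A} (hr : r ∈ arrowIdeal bas) (i : V) :
    rhoAug bas i r = 0 := by
  have hle : arrowIdeal bas ≤ LinearMap.ker (bas.coord ⟨i, i, .nil⟩) := by
    refine Submodule.span_le.2 ?_
    rintro _ ⟨a, b, p, hp, rfl⟩
    exact rhoAug_basis_of_length_ne_zero bas (t := ⟨a, b, p⟩) hp i
  exact hle hr

variable (hmul : ∀ (i j k : V) (p : Quiver.Path i j) (q : Quiver.Path j k),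
    bas ⟨i, j, p⟩ * bas ⟨j, k, q⟩ = bas ⟨i, k, p.comp q⟩)
  (hzero : ∀ (i j j' k : V) (p : Quiver.Path i j) (q : Quiver.Path j' k), j ≠ j' →
    bas ⟨i, j, p⟩ * bas ⟨j', k, q⟩ = 0)
include hmul hzero

theorem vertex_mul_vertex [DecidableEq V] (i j : V) :
    bas ⟨i, i, .nil⟩ * bas ⟨j, j, .nil⟩ = if i = j then bas ⟨i, i, .nil⟩ else 0 := by
  split_ifs with hij
  · subst hij
    rw [hmul]
    rfl
  · exact hzero _ _ _ _ _ _ hij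

theorem sum_vertex [Fintype V] : ∑ i, bas ⟨i, i, .nil⟩ = 1 := by
  have h : LinearMap.mulLeft K (∑ i, bas ⟨i, i, .nil⟩) = LinearMap.id := by
    refine bas.ext fun ⟨a, b, p⟩ => ?_
    rw [LinearMap.mulLeft_apply, Finset.sum_mul, Finset.sum_eq_single a
      (fun i _ hi => hzero _ _ _ _ _ _ hi) (by simp), hmul, Quiver.Path.nil_comp]
    rfl
  simpa using LinearMap.congr_fun h 1

theorem basis_mul_basis_mem_arrowIdeal (t t' : Σ (a : V) (b : V), Quiver.Path a b)
    (h : t.2.2.length ≠ 0 ∨ t'.2.2.length ≠ 0) : bas t * bas t' ∈ arrowIdeal bas := by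
  obtain ⟨a, b, p⟩ := t
  obtain ⟨c, d, q⟩ := t'
  by_cases hbc : b = c
  · subst hbc
    rw [hmul]
    exact basis_mem_arrowIdeal bas (by simp only [Quiver.Path.length_comp] at h ⊢; omega)
  · rw [hzero _ _ _ _ _ _ hbc]
    exact zero_mem _

theorem mul_mem_arrowIdeal {r : A} (hr : r ∈ arrowIdeal bas) (y : A) :
    r * y ∈ arrowIdeal bas := by
  refine (Submodule.span_le (p := (arrowIdeal bas).comap (LinearMap.mulRight K y))).2 ?_ hr
  rintro _ ⟨a, b, p, hp, rfl⟩
  exact bas.map_mem_of_forall (LinearMap.mulLeft K (bas ⟨a, b, p⟩))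
    (fun t' => basis_mul_basis_mem_arrowIdeal bas hmul hzero _ t' (Or.inl hp)) y

theorem rhoAug_mul (i : V) (x y : A) :
    rhoAug bas i (x * y) = rhoAug bas i x * rhoAug bas i y := by
  classical
  have h : (LinearMap.mul K A).compr₂ (bas.coord ⟨i, i, .nil⟩) =
      (LinearMap.mul K K).compl₁₂ (bas.coord ⟨i, i, .nil⟩) (bas.coord ⟨i, i, .nil⟩) := by
    refine bas.ext fun t => bas.ext fun t' => ?_
    change rhoAug bas i (bas t * bas t') = rhoAug bas i (bas t) * rhoAug bas i (bas t')
    rcases Quiver.sigmaPath_eq_nil_or_length_ne_zero t with ⟨a, rfl⟩ | ht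
    · rcases Quiver.sigmaPath_eq_nil_or_length_ne_zero t' with ⟨c, rfl⟩ | ht'
      · rw [vertex_mul_vertex bas hmul hzero, rhoAug_vertex bas i a, rhoAug_vertex bas i c]
        by_cases hac : a = c
        · subst hac
          rw [if_pos rfl, rhoAug_vertex]
          split_ifs <;> simp
        · rw [if_neg hac]
          split_ifs <;> simp_all [rhoAug]
      · rw [rhoAug_eq_zero_of_mem_arrowIdeal bas
          (basis_mul_basis_mem_arrowIdeal bas hmul hzero _ _ (Or.inr ht')),
          rhoAug_basis_of_length_ne_zero bas ht', mul_zero]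
    · rw [rhoAug_eq_zero_of_mem_arrowIdeal bas
        (basis_mul_basis_mem_arrowIdeal bas hmul hzero _ _ (Or.inl ht)),
        rhoAug_basis_of_length_ne_zero bas ht, zero_mul]
  exact LinearMap.congr_fun₂ h x y

noncomputable def pathAugmentation [Fintype V] (i : V) : A →ₐ[K] K :=
  AlgHom.ofLinearMap (bas.coord ⟨i, i, .nil⟩)
    (by classical
        rw [← sum_vertex bas hmul hzero, map_sum]
        change ∑ j, rhoAug bas i (bas ⟨j, j, .nil⟩) = 1
        simp [rhoAug_vertex])
    (rhoAug_mul bas hmul hzero i)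

theorem pathAugmentation_apply [Fintype V] (i : V) (x : A) :
    pathAugmentation bas hmul hzero i x = rhoAug bas i x := rfl

theorem pathAugmentation_eq_of_mem [Fintype V] {b : A} (hb : b ∈ primaryArrowSubalgebra bas)
    (i j : V) : pathAugmentation bas hmul hzero i b = pathAugmentation bas hmul hzero j b := by
  refine (Algebra.adjoin_le (S := AlgHom.equalizer (pathAugmentation bas hmul hzero i)
    (pathAugmentation bas hmul hzero j)) fun x hx => ?_) hb
  have hx' : x ∈ arrowIdeal bas := Submodule.subset_span hx
  simp only [SetLike.mem_coe, AlgHom.mem_equalizer, pathAugmentation_apply,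
    rhoAug_eq_zero_of_mem_arrowIdeal bas hx']

theorem sub_vertexPart_mem_arrowIdeal [Fintype V] [DecidableEq V] (x : A) :
    x - vertexPart (fun i => bas ⟨i, i, .nil⟩) (pathAugmentation bas hmul hzero) x ∈
      arrowIdeal bas := by
  let f : A →ₗ[K] A :=
    LinearMap.id - ∑ i, (bas.coord ⟨i, i, .nil⟩).smulRight (bas ⟨i, i, .nil⟩)
  have hf : ∀ y, f y =
      y - vertexPart (fun i => bas ⟨i, i, .nil⟩) (pathAugmentation bas hmul hzero) y := fun y => by
    simp [f, vertexPart, pathAugmentation_apply, rhoAug]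
  rw [← hf]
  refine bas.map_mem_of_forall f (fun t => ?_) x
  rw [hf]
  rcases Quiver.sigmaPath_eq_nil_or_length_ne_zero t with ⟨a, rfl⟩ | ht
  · simp [vertexPart, pathAugmentation_apply, rhoAug_vertex]
  · simpa [vertexPart, pathAugmentation_apply, rhoAug_basis_of_length_ne_zero bas ht]
      using basis_mem_arrowIdeal bas ht

theorem isPrimarySplitting [Fintype V] [DecidableEq V] :
    IsPrimarySplitting (primaryArrowSubalgebra bas).toSubring (fun i => bas ⟨i, i, .nil⟩)
      (pathAugmentation bas hmul hzero) where
  mul_eq := vertex_mul_vertex bas hmul hzero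
  sum_eq_one := sum_vertex bas hmul hzero
  apply_eq := rhoAug_vertex bas
  algebraMap_mem := (primaryArrowSubalgebra bas).algebraMap_mem
  eq_of_mem _ hb := pathAugmentation_eq_of_mem bas hmul hzero hb
  sub_vertexPart_mul_mem x y := Algebra.span_le_adjoin K _
    (mul_mem_arrowIdeal bas hmul hzero (sub_vertexPart_mem_arrowIdeal bas hmul hzero x) y)

end PathAlgebra

/-- For the primary arrow subalgebra `B = K·1 + rad A` of the path
algebra `A = KQ` of a finite connected acyclic quiver with `n` vertices, there is an
isomorphism of `A`-`B`-bimodules `A ⊗_B A ≅ A ⊕ ⨁_{i} (n-1)·(ᵢK_ε)`, where `A` acts on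
the copy `(i, j)` of `K` via the augmentation `ρ_i` and `B` acts via its augmentation
`ε` (which agrees with every `ρ_i` on `B`).  In particular the same decomposition holds
as `B`-`B`-bimodules (with `n(n-1)` copies of `_εK_ε`). -/
theorem tensor_square_arrow_subalgebra
    (K : Type u) [Field K] [IsAlgClosed K]
    (V : Type u) [Quiver.{u+1} V] [Fintype V] [∀ a b : V, Finite (a ⟶ b)]
    (hacyclic : ∀ (a : V) (p : Quiver.Path a a), p = Quiver.Path.nil)
    (hconn : Subsingleton (Quiver.WeaklyConnectedComponent V)) (hne : Nonempty V)
    (A : Type u) [Ring A] [Algebra K A]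
    (bas : Module.Basis (Σ (a : V) (b : V), Quiver.Path a b) K A)
    (hmul : ∀ (i j k : V) (p : Quiver.Path i j) (q : Quiver.Path j k),
      bas ⟨i, j, p⟩ * bas ⟨j, k, q⟩ = bas ⟨i, k, p.comp q⟩)
    (hzero : ∀ (i j j' k : V) (p : Quiver.Path i j) (q : Quiver.Path j' k), j ≠ j' →
      bas ⟨i, j, p⟩ * bas ⟨j', k, q⟩ = 0)
    (B' : Subring A)
    (hB' : B' = (Algebra.adjoin K
      {x : A | ∃ (i j : V) (p : Quiver.Path i j),
        p.length ≠ 0 ∧ x = bas ⟨i, j, p⟩}).toSubring) :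
    (∃ e : (CC B' 2 : Type u) ≃ₗ[ℤ] (A × (V × Fin (Fintype.card V - 1) → K)),
      (∀ (a : A) (x : (CC B' 2 : Type u)), e (lA B' a 1 x) =
        (a * (e x).1, fun p => rhoAug bas p.1 a * (e x).2 p)) ∧
      (∀ (b : ↥B') (x : (CC B' 2 : Type u)), e (rB B' b 2 x) =
        ((e x).1 * (b : A), fun p => (e x).2 p * rhoAug bas p.1 (b : A)))) ∧
    (∃ e : (CC B' 2 : Type u) ≃ₗ[ℤ] (A × (V × Fin (Fintype.card V - 1) → K)),
      (∀ (b : ↥B') (x : (CC B' 2 : Type u)), e (lB B' b 2 x) =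
        ((b : A) * (e x).1, fun p => rhoAug bas p.1 (b : A) * (e x).2 p)) ∧
      (∀ (b : ↥B') (x : (CC B' 2 : Type u)), e (rB B' b 2 x) =
        ((e x).1 * (b : A), fun p => (e x).2 p * rhoAug bas p.1 (b : A)))) := by
  classical
  subst hB'
  have h := isPrimarySplitting bas hmul hzero
  let e := h.tensorSquareEquiv.trans
    ((LinearEquiv.refl ℤ A).prodCongr (LinearEquiv.funCongrLeft ℤ K (offDiagEquiv V)))
  have hl : ∀ (a : A) x, e (lA _ a 1 x) = (a * (e x).1, fun p => rhoAug bas p.1 a * (e x).2 p) :=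
    fun a x => by
      ext q <;> simp [e, h.tensorSquareEquiv_lA, LinearMap.funLeft_apply, offDiagEquiv_fst,
        pathAugmentation_apply]
  have hr : ∀ (b : (primaryArrowSubalgebra bas).toSubring) x, e (rB _ b 2 x) =
      ((e x).1 * (b : A), fun p => (e x).2 p * rhoAug bas p.1 (b : A)) :=
    fun b x => by
      ext q <;> simp [e, h.tensorSquareEquiv_rB, LinearMap.funLeft_apply, offDiagEquiv_fst,
        pathAugmentation_apply]
  exact ⟨⟨e, hl, hr⟩, e, fun b => hl b, hr⟩
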